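/- Let V be a real normed vector space, let v_1, ..., v_T be vectors in V with ‖v_1‖ ≤ ε and let α_1, ..., α_T be nonnegative reals with Σ_j α_j = 1. Set β = 1 − α_1 = Σ_{j>1} α_j and suppose μ > 0, c ∈ (0,1], δ > 0 are such that ‖Σ_{j>1} α_j v_j‖ ≥ β·c·μ (the non-cancellation hypothesis on the renormalized average of the non-sink values). If ‖Σ_{j=1}^T α_j v_j‖ < δ, then α_1 ≥ 1 − (δ + ε)/(μ·c). -/

import Mathlib

/-!
Removing the sink term from the small total update costs at most `‖α₁ v₁‖ ≤ ε`, so the non-sink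
part has norm below `δ + ε`; by non-cancellation it is at least `(1 - α₁) c μ`, which bounds
the non-sink mass `1 - α₁` by `(δ + ε) / (μ c)`.
-/

theorem Finset.norm_sum_erase_le {ι E : Type*} [SeminormedAddCommGroup E] [DecidableEq ι]
    {s : Finset ι} {i : ι} (hi : i ∈ s) (f : ι → E) :
    ‖∑ j ∈ s.erase i, f j‖ ≤ ‖∑ j ∈ s, f j‖ + ‖f i‖ := by
  rw [Finset.sum_erase_eq_sub hi]
  exact norm_sub_le _ _

theorem norm_smul_le_of_mem_Icc {E : Type*} [SeminormedAddCommGroup E] [NormedSpace ℝ E]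
    {a ε : ℝ} {x : E} (ha : a ∈ Set.Icc (0 : ℝ) 1) (hx : ‖x‖ ≤ ε) : ‖a • x‖ ≤ ε := by
  rw [norm_smul, Real.norm_of_nonneg ha.1]
  exact (mul_le_of_le_one_left (norm_nonneg x) ha.2).trans hx

theorem one_sub_div_le_of_one_sub_mul_lt {a r b : ℝ} (hr : 0 < r) (h : (1 - a) * r < b) :
    1 - b / r ≤ a := by
  have := (lt_div_iff₀ hr).2 h
  linarith

theorem sink_necessity_general {V : Type*} [NormedAddCommGroup V] [NormedSpace ℝ V]
    {T : ℕ} (hT : 0 < T) (v : Fin T → V) (α : Fin T → ℝ) (ε μ c δ : ℝ)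
    (hα : ∀ j, 0 ≤ α j) (hsum : ∑ j, α j = 1)
    (hv1 : ‖v ⟨0, hT⟩‖ ≤ ε)
    (hμ : 0 < μ) (hc : 0 < c)
    (hnc : (1 - α ⟨0, hT⟩) * c * μ ≤ ‖∑ j ∈ Finset.univ.erase ⟨0, hT⟩, α j • v j‖)
    (hsmall : ‖∑ j, α j • v j‖ < δ) :
    α ⟨0, hT⟩ ≥ 1 - (δ + ε) / (μ * c) := by
  set i₀ : Fin T := ⟨0, hT⟩
  have hα₀ : α i₀ ∈ Set.Icc (0 : ℝ) 1 :=
    ⟨hα i₀, hsum ▸ Finset.single_le_sum (fun j _ => hα j) (Finset.mem_univ i₀)⟩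
  have hsink : ‖α i₀ • v i₀‖ ≤ ε := norm_smul_le_of_mem_Icc hα₀ hv1
  have hrest : ‖∑ j ∈ Finset.univ.erase i₀, α j • v j‖ < δ + ε :=
    (Finset.norm_sum_erase_le (Finset.mem_univ i₀) _).trans_lt (by linarith)
  refine one_sub_div_le_of_one_sub_mul_lt (mul_pos hμ hc) ?_
  linarith [mul_right_comm (1 - α i₀) c μ, mul_assoc (1 - α i₀) μ c]

/-- Sink Necessity Lemma: at Kalman gain K = 1, a residual attention update can keep
`h' = h + ∑ j α j • v j` close to `h` only by concentrating almost all attention mass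
on a small-norm value vector (an attention sink). -/
theorem sink_necessity {V : Type*} [NormedAddCommGroup V] [NormedSpace ℝ V]
    {T : ℕ} (hT : 0 < T) (v : Fin T → V) (α : Fin T → ℝ) (ε μ c δ : ℝ)
    (hα : ∀ j, 0 ≤ α j) (hsum : ∑ j, α j = 1)
    (hv1 : ‖v ⟨0, hT⟩‖ ≤ ε)
    (hμ : 0 < μ) (hc : 0 < c) (hc1 : c ≤ 1) (hδ : 0 < δ)
    (hnc : (1 - α ⟨0, hT⟩) * c * μ ≤ ‖∑ j ∈ Finset.univ.erase ⟨0, hT⟩, α j • v j‖)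
    (hsmall : ‖∑ j, α j • v j‖ < δ) :
    α ⟨0, hT⟩ ≥ 1 - (δ + ε) / (μ * c) :=
  sink_necessity_general hT v α ε μ c δ hα hsum hv1 hμ hc hnc hsmall
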